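/- Let Γ be a group, G and H subgroups of Γ, and A an H-set. Let (γ_j)_{j∈J} be a complete set of representatives of the double cosets G\Γ/H, so that Γ is the disjoint union of the sets Gγ_jH. Then the map f ↦ (f(γ_j))_{j∈J} is a bijection between the G-fixed points of the coinduced set Map_H(Γ,A) (with the Γ-action restricted to G) and the product ∏_{j∈J} A^{γ_j⁻¹Gγ_j ∩ H}, where for each j the subgroup γ_j⁻¹Gγ_j ∩ H of H acts on A by the restricted H-action. -/
import Mathlib


/-- Double-coset computation of fixed points (key identification in the proof of
Theorem 4.2 of the paper): if `(γ j)` is a complete set of representatives of the double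
cosets `G\Γ/H` and `A` is an `H`-set, then `f ↦ (f (γ j))ⱼ` is a bijection from the
`G`-fixed points of the coinduced set `Map_H(Γ, A)` onto `∏ j, A^{γⱼ⁻¹Gγⱼ ∩ H}`. -/
theorem fixed_points_of_coinduced_set_double_cosets
    (Γ : Type*) [Group Γ] (G H : Subgroup Γ) (A : Type*) [MulAction H A]
    (J : Type*) (γ : J → Γ)
    (hrep : ∀ x : Γ, ∃! j : J, ∃ (g : G) (h : H), x = (g : Γ) * γ j * (h : Γ)) :
    Function.Bijective
      (fun f : {f : Γ → A //
          (∀ (x : Γ) (h : H), f (x * (h : Γ)) = h⁻¹ • f x) ∧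
          (∀ (g : G) (x : Γ), f ((g : Γ)⁻¹ * x) = f x)} =>
        (fun j => ⟨f.1 (γ j), by
          intro h hh
          have h1 := f.2.1 (γ j) h⁻¹
          have h2 := f.2.2 ⟨γ j * (h : Γ) * (γ j)⁻¹, hh⟩ (γ j)
          have e : (γ j * (h : Γ) * (γ j)⁻¹)⁻¹ * γ j = γ j * (h : Γ)⁻¹ := by group
          have h2' : f.1 (γ j * (h : Γ)⁻¹) = f.1 (γ j) := by rw [← e]; exact h2
          simp only [inv_inv] at h1
          rw [← h1]
          simpa using h2'⟩ :
          ∀ j : J, {a : A // ∀ h : H, γ j * (h : Γ) * (γ j)⁻¹ ∈ G → h • a = a})) := by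
  constructor
  · -- injectivity
    intro f f' hff'
    have keyval : ∀ j, f.1 (γ j) = f'.1 (γ j) := fun j =>
      congrArg Subtype.val (congrFun hff' j)
    apply Subtype.ext; funext x
    obtain ⟨j, ⟨g, h, hx⟩, -⟩ := hrep x
    have l : ∀ F : {f : Γ → A //
        (∀ (x : Γ) (h : H), f (x * (h : Γ)) = h⁻¹ • f x) ∧
        (∀ (g : G) (x : Γ), f ((g : Γ)⁻¹ * x) = f x)},
        F.1 x = h⁻¹ • F.1 (γ j) := by
      intro F
      have h1 := F.2.1 ((g : Γ) * γ j) h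
      have h2 := F.2.2 g ((g : Γ) * γ j)
      have e : (g : Γ)⁻¹ * ((g : Γ) * γ j) = γ j := by group
      rw [hx, h1]
      congr 1
      rw [← h2, e]
    rw [l f, l f', keyval j]
  · -- surjectivity
    intro a
    have wd : ∀ (j : J) (g g' : G) (h h' : H),
        (g : Γ) * γ j * h = (g' : Γ) * γ j * h' →
        h⁻¹ • (a j).1 = h'⁻¹ • (a j).1 := by
      intro j g g' h h' he
      have L : (g'⁻¹ : Γ) * ((g : Γ) * γ j * h) * (h : Γ)⁻¹ * (γ j)⁻¹
          = (g'⁻¹ : Γ) * (g : Γ) := by group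
      have R : (g'⁻¹ : Γ) * ((g' : Γ) * γ j * h') * (h : Γ)⁻¹ * (γ j)⁻¹
          = γ j * ((h' : Γ) * (h : Γ)⁻¹) * (γ j)⁻¹ := by group
      have hmem : γ j * ((h' * h⁻¹ : H) : Γ) * (γ j)⁻¹ ∈ G := by
        have e2 : γ j * ((h' : Γ) * (h : Γ)⁻¹) * (γ j)⁻¹ = (g'⁻¹ : Γ) * (g : Γ) := by
          rw [← L, ← R, he]
        push_cast
        rw [e2]
        exact mul_mem (inv_mem g'.2) g.2
      have hfix := (a j).2 (h' * h⁻¹) hmem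
      calc h⁻¹ • (a j).1 = h'⁻¹ • ((h' * h⁻¹) • (a j).1) := by
            rw [mul_smul, inv_smul_smul]
        _ = h'⁻¹ • (a j).1 := by rw [hfix]
    choose j hj hun using hrep
    choose g h hgh using hj
    set F : Γ → A := fun x => (h x)⁻¹ • (a (j x)).1 with hF
    have key : ∀ (x : Γ) (j₀ : J) (g₀ : G) (h₀ : H),
        x = (g₀ : Γ) * γ j₀ * h₀ → F x = h₀⁻¹ • (a j₀).1 := by
      intro x j₀ g₀ h₀ hx
      have hj0 : j₀ = j x := hun x j₀ ⟨g₀, h₀, hx⟩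
      subst hj0
      exact wd _ (g x) g₀ (h x) h₀ (by rw [← hgh x]; exact hx)
    have prop1 : ∀ (x : Γ) (h₀ : H), F (x * (h₀ : Γ)) = h₀⁻¹ • F x := by
      intro x h₀
      have hd : x * (h₀ : Γ) = (g x : Γ) * γ (j x) * ((h x * h₀ : H) : Γ) := by
        push_cast
        rw [← mul_assoc, ← hgh x]
      rw [key (x * (h₀ : Γ)) (j x) (g x) (h x * h₀) hd, mul_inv_rev, mul_smul]
    have prop2 : ∀ (g₀ : G) (x : Γ), F ((g₀ : Γ)⁻¹ * x) = F x := by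
      intro g₀ x
      have hd : (g₀ : Γ)⁻¹ * x = ((g₀⁻¹ * g x : G) : Γ) * γ (j x) * (h x : Γ) := by
        push_cast
        rw [mul_assoc, mul_assoc, ← mul_assoc (g x : Γ), ← hgh x]
      rw [key _ (j x) (g₀⁻¹ * g x) (h x) hd]
    refine ⟨⟨F, prop1, prop2⟩, ?_⟩
    funext j₀
    apply Subtype.ext
    show F (γ j₀) = (a j₀).1
    have := key (γ j₀) j₀ 1 1 (by simp)
    simpa using this
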